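/- For the scalar ODE ẋ = −ρx − κ₁|x|^{γ₁} sgn(x) − κ₂|x|^{γ₂} sgn(x) with ρ, κ₁, κ₂ > 0, 0 < γ₁ < 1 < γ₂, and |x₀| < 1, the settling time satisfies T(x₀) ≥ ln(1 + ((ρ+κ₂)/κ₁)|x₀|^{1−γ₁}) / ((ρ+κ₂)(1−γ₁)). -/

import Mathlib

/-!
By oddness of the equation we may assume `x₀ > 0`; then `x` stays positive up to its first
zero `τ`, and is decreasing there, so `0 < x < 1` on `[0, τ)`. In the variable `u = x^(1-γ₁)`
the equation reads `u' = -(1-γ₁)(ρ u + κ₁ + κ₂ x^(γ₂-γ₁))`. Since `u' ≤ -(1-γ₁) κ₁`, the zero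
`τ` exists at all (otherwise the infimum would be the junk value `0`). Since `x^(γ₂-γ₁) ≤ u`
for `x ≤ 1`, also `u' ≥ -(1-γ₁)((ρ+κ₂) u + κ₁)`, so `e^{(ρ+κ₂)(1-γ₁)t} ((ρ+κ₂) u + κ₁)` is
nondecreasing on `[0, τ]`; comparing its values at `0` and `τ` gives the bound.
-/

/-- Signed power `|y|^γ sgn(y)` appearing in the attracting laws. -/
noncomputable def spow (y γ : ℝ) : ℝ := |y| ^ γ * Real.sign y

open Set Real

lemma spow_of_pos {y : ℝ} (hy : 0 < y) (γ : ℝ) : spow y γ = y ^ γ := by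
  simp [spow, abs_of_pos hy, Real.sign_of_pos hy]

lemma spow_neg (y γ : ℝ) : spow (-y) γ = -spow y γ := by
  simp [spow, Real.sign_neg, abs_neg]

lemma ContinuousOn.pos_of_forall_ne_zero {f : ℝ → ℝ} {a b : ℝ} (hab : a ≤ b)
    (hf : ContinuousOn f (Icc a b)) (ha : 0 < f a) (hne : ∀ t ∈ Icc a b, f t ≠ 0) : 0 < f b := by
  by_contra! hb
  obtain ⟨c, hc, hfc⟩ := intermediate_value_Icc' hab hf ⟨hb, ha.le⟩
  exact hne c hc hfc

section PositiveSolution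

variable {ρ κ₁ κ₂ γ₁ γ₂ : ℝ} {x : ℝ → ℝ} {T : ℝ}

lemma hasDerivAt_rpow_one_sub_of_ode {t : ℝ} (hx : 0 < x t)
    (hd : HasDerivAt x (-ρ * x t - κ₁ * x t ^ γ₁ - κ₂ * x t ^ γ₂) t) :
    HasDerivAt (fun s => x s ^ (1 - γ₁))
      (-(1 - γ₁) * (ρ * x t ^ (1 - γ₁) + κ₁ + κ₂ * x t ^ (γ₂ - γ₁))) t := by
  convert hd.rpow_const (p := 1 - γ₁) (Or.inl hx.ne') using 1
  have e₁ : x t ^ (1 - γ₁) = x t * x t ^ (-γ₁) := by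
    rw [show 1 - γ₁ = 1 + -γ₁ by ring, rpow_add hx, rpow_one]
  have e₂ : x t ^ γ₁ * x t ^ (-γ₁) = 1 := by rw [← rpow_add hx]; simp
  have e₃ : x t ^ (γ₂ - γ₁) = x t ^ γ₂ * x t ^ (-γ₁) := by rw [← rpow_add hx]; ring_nf
  rw [show 1 - γ₁ - 1 = -γ₁ by ring, e₁, e₃]
  linear_combination (1 - γ₁) * κ₁ * e₂

lemma antitoneOn_of_ode (hρ : 0 ≤ ρ) (hκ₁ : 0 ≤ κ₁) (hκ₂ : 0 ≤ κ₂)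
    (hcont : ContinuousOn x (Icc 0 T))
    (hode : ∀ t ∈ Ioo 0 T, HasDerivAt x (-ρ * x t - κ₁ * x t ^ γ₁ - κ₂ * x t ^ γ₂) t)
    (hpos : ∀ t ∈ Ioo 0 T, 0 < x t) : AntitoneOn x (Icc 0 T) := by
  refine antitoneOn_of_hasDerivWithinAt_nonpos (convex_Icc 0 T) hcont
    (f' := fun t => -ρ * x t - κ₁ * x t ^ γ₁ - κ₂ * x t ^ γ₂) ?_ ?_ <;> rw [interior_Icc]
  · exact fun t ht => (hode t ht).hasDerivWithinAt
  · intro t ht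
    have hxt := (hpos t ht).le
    nlinarith [mul_nonneg hρ hxt, mul_nonneg hκ₁ (rpow_nonneg hxt γ₁),
      mul_nonneg hκ₂ (rpow_nonneg hxt γ₂)]

lemma rpow_add_mul_antitoneOn_of_ode (hρ : 0 ≤ ρ) (hκ₂ : 0 ≤ κ₂) (hγ₁ : γ₁ ≤ 1)
    (hcont : ContinuousOn x (Icc 0 T))
    (hode : ∀ t ∈ Ioo 0 T, HasDerivAt x (-ρ * x t - κ₁ * x t ^ γ₁ - κ₂ * x t ^ γ₂) t)
    (hpos : ∀ t ∈ Ioo 0 T, 0 < x t) :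
    AntitoneOn (fun s => x s ^ (1 - γ₁) + (1 - γ₁) * κ₁ * s) (Icc 0 T) := by
  refine antitoneOn_of_hasDerivWithinAt_nonpos (convex_Icc 0 T)
    ((hcont.rpow_const fun _ _ => Or.inr (sub_nonneg.2 hγ₁)).add (by fun_prop))
    (f' := fun t => -(1 - γ₁) * (ρ * x t ^ (1 - γ₁) + κ₁ + κ₂ * x t ^ (γ₂ - γ₁))
      + (1 - γ₁) * κ₁) ?_ ?_ <;> rw [interior_Icc]
  · intro t ht
    exact ((hasDerivAt_rpow_one_sub_of_ode (hpos t ht) (hode t ht)).add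
      ((hasDerivAt_id t).const_mul _ |>.congr_deriv (mul_one _))).hasDerivWithinAt
  · intro t ht
    have hxt := (hpos t ht).le
    nlinarith [mul_nonneg (sub_nonneg.2 hγ₁) (mul_nonneg hρ (rpow_nonneg hxt (1 - γ₁))),
      mul_nonneg (sub_nonneg.2 hγ₁) (mul_nonneg hκ₂ (rpow_nonneg hxt (γ₂ - γ₁)))]

lemma exp_mul_rpow_add_monotoneOn_of_ode (hρκ : 0 ≤ ρ + κ₂) (hκ₂ : 0 ≤ κ₂) (hγ₁ : γ₁ ≤ 1)
    (hγ₂ : 1 ≤ γ₂) (hcont : ContinuousOn x (Icc 0 T))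
    (hode : ∀ t ∈ Ioo 0 T, HasDerivAt x (-ρ * x t - κ₁ * x t ^ γ₁ - κ₂ * x t ^ γ₂) t)
    (hpos : ∀ t ∈ Ioo 0 T, 0 < x t) (hle : ∀ t ∈ Ioo 0 T, x t ≤ 1) :
    MonotoneOn (fun s => exp ((ρ + κ₂) * (1 - γ₁) * s) * ((ρ + κ₂) * x s ^ (1 - γ₁) + κ₁))
      (Icc 0 T) := by
  set a := (ρ + κ₂) * (1 - γ₁)
  refine monotoneOn_of_hasDerivWithinAt_nonneg (convex_Icc 0 T)
    ((by fun_prop : Continuous fun s => exp (a * s)).continuousOn.mul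
      (((hcont.rpow_const fun _ _ => Or.inr (sub_nonneg.2 hγ₁)).const_smul (ρ + κ₂)).add
        continuousOn_const))
    (f' := fun t => exp (a * t) * a * ((ρ + κ₂) * x t ^ (1 - γ₁) + κ₁) + exp (a * t) *
      ((ρ + κ₂) * (-(1 - γ₁) * (ρ * x t ^ (1 - γ₁) + κ₁ + κ₂ * x t ^ (γ₂ - γ₁))))) ?_ ?_
    <;> rw [interior_Icc]
  · intro t ht
    have hexp : HasDerivAt (fun s => exp (a * s)) (exp (a * t) * a) t := by
      simpa using ((hasDerivAt_id t).const_mul a).exp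
    exact (hexp.mul (((hasDerivAt_rpow_one_sub_of_ode (hpos t ht) (hode t ht)).const_mul
      (ρ + κ₂)).add_const κ₁)).hasDerivWithinAt
  · intro t ht
    -- the `ρ`-terms cancel; what is left is `κ₂ (x^(1-γ₁) - x^(γ₂-γ₁))`, nonnegative as `x ≤ 1`
    have hxt := hpos t ht
    have hw : x t ^ (γ₂ - γ₁) ≤ x t ^ (1 - γ₁) :=
      rpow_le_rpow_of_exponent_ge hxt (hle t ht) (by linarith)
    have key : exp (a * t) * a * ((ρ + κ₂) * x t ^ (1 - γ₁) + κ₁) + exp (a * t) *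
        ((ρ + κ₂) * (-(1 - γ₁) * (ρ * x t ^ (1 - γ₁) + κ₁ + κ₂ * x t ^ (γ₂ - γ₁)))) =
        exp (a * t) * a * (κ₂ * (x t ^ (1 - γ₁) - x t ^ (γ₂ - γ₁))) := by ring
    rw [key]
    exact mul_nonneg (mul_nonneg (exp_pos _).le (mul_nonneg hρκ (sub_nonneg.2 hγ₁)))
      (mul_nonneg hκ₂ (sub_nonneg.2 hw))

lemma exists_zero_of_ode (hρ : 0 ≤ ρ) (hκ₁ : 0 < κ₁) (hκ₂ : 0 ≤ κ₂) (hγ₁ : γ₁ < 1)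
    (hx0 : 0 < x 0)
    (hode : ∀ t, 0 ≤ t → HasDerivAt x (-ρ * x t - κ₁ * spow (x t) γ₁ - κ₂ * spow (x t) γ₂) t) :
    ∃ t, 0 ≤ t ∧ x t = 0 := by
  by_contra! hne
  have hcont : ContinuousOn x (Ici 0) := fun t ht => (hode t ht).continuousAt.continuousWithinAt
  have hpos : ∀ t, 0 ≤ t → 0 < x t := fun t ht =>
    (hcont.mono Icc_subset_Ici_self).pos_of_forall_ne_zero ht hx0 fun s hs => hne s hs.1
  have hc : 0 < (1 - γ₁) * κ₁ := mul_pos (sub_pos.2 hγ₁) hκ₁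
  set T := x 0 ^ (1 - γ₁) / ((1 - γ₁) * κ₁) + 1
  have hT : 0 ≤ T := by positivity
  have hanti := rpow_add_mul_antitoneOn_of_ode hρ hκ₂ hγ₁.le (hcont.mono Icc_subset_Ici_self)
    (fun t ht => by simpa only [spow_of_pos (hpos t ht.1.le)] using hode t ht.1.le)
    (fun t ht => hpos t ht.1.le) (left_mem_Icc.2 hT) (right_mem_Icc.2 hT) hT
  have hcT : (1 - γ₁) * κ₁ * T = x 0 ^ (1 - γ₁) + (1 - γ₁) * κ₁ := by
    rw [mul_add, mul_div_cancel₀ _ hc.ne', mul_one]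
  simp only [mul_zero, add_zero] at hanti
  linarith [rpow_nonneg (hpos T hT).le (1 - γ₁)]

lemma log_div_le_sInf_of_ode (hρ : 0 ≤ ρ) (hκ₁ : 0 < κ₁) (hκ₂ : 0 ≤ κ₂) (hγ₁ : γ₁ < 1)
    (hγ₂ : 1 ≤ γ₂) (hx0 : 0 < x 0) (hx1 : x 0 ≤ 1)
    (hode : ∀ t, 0 ≤ t → HasDerivAt x (-ρ * x t - κ₁ * spow (x t) γ₁ - κ₂ * spow (x t) γ₂) t) :
    log (1 + (ρ + κ₂) / κ₁ * x 0 ^ (1 - γ₁)) / ((ρ + κ₂) * (1 - γ₁)) ≤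
      sInf {t : ℝ | 0 ≤ t ∧ x t = 0} := by
  set S := {t : ℝ | 0 ≤ t ∧ x t = 0}
  have hcont : ContinuousOn x (Ici 0) := fun t ht => (hode t ht).continuousAt.continuousWithinAt
  have hbdd : BddBelow S := ⟨0, fun t ht => ht.1⟩
  have hτ : sInf S ∈ S :=
    (hcont.preimage_isClosed_of_isClosed isClosed_Ici isClosed_singleton).csInf_mem
      (exists_zero_of_ode hρ hκ₁ hκ₂ hγ₁ hx0 hode) hbdd
  set τ := sInf S
  have hpos : ∀ t ∈ Ioo 0 τ, 0 < x t := fun t ht =>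
    (hcont.mono Icc_subset_Ici_self).pos_of_forall_ne_zero ht.1.le hx0 fun s hs h0 =>
      notMem_of_lt_csInf (hs.2.trans_lt ht.2) hbdd ⟨hs.1, h0⟩
  have hode' : ∀ t ∈ Ioo 0 τ,
      HasDerivAt x (-ρ * x t - κ₁ * x t ^ γ₁ - κ₂ * x t ^ γ₂) t := fun t ht => by
    simpa only [spow_of_pos (hpos t ht)] using hode t ht.1.le
  have hcont' : ContinuousOn x (Icc 0 τ) := hcont.mono Icc_subset_Ici_self
  have hanti := antitoneOn_of_ode hρ hκ₁.le hκ₂ hcont' hode' hpos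
  have hmono := exp_mul_rpow_add_monotoneOn_of_ode (add_nonneg hρ hκ₂) hκ₂ hγ₁.le hγ₂ hcont'
    hode' hpos
    (fun t ht => (hanti (left_mem_Icc.2 hτ.1) (Ioo_subset_Icc_self ht) ht.1.le).trans hx1)
    (left_mem_Icc.2 hτ.1) (right_mem_Icc.2 hτ.1) hτ.1
  simp only [mul_zero, exp_zero, one_mul, hτ.2, zero_rpow (sub_ne_zero.2 hγ₁.ne'),
    zero_add] at hmono
  have hlog : log (1 + (ρ + κ₂) / κ₁ * x 0 ^ (1 - γ₁)) ≤ (ρ + κ₂) * (1 - γ₁) * τ := by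
    rw [log_le_iff_le_exp (by positivity), div_mul_eq_mul_div, one_add_div hκ₁.ne',
      div_le_iff₀ hκ₁]
    linarith
  exact div_le_of_le_mul₀ (mul_nonneg (add_nonneg hρ hκ₂) (sub_nonneg.2 hγ₁.le)) hτ.1
    (by linarith)

end PositiveSolution

theorem stmt_8_general (ρ κ₁ κ₂ γ₁ γ₂ : ℝ)
    (hρ : 0 < ρ) (hκ₁ : 0 < κ₁) (hκ₂ : 0 < κ₂)
    (hγ₁1 : γ₁ < 1) (hγ₂ : 1 < γ₂)
    (x : ℝ → ℝ) (x₀ : ℝ) (hx0 : x 0 = x₀) (hx₀ : |x₀| < 1)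
    (hode : ∀ t, 0 ≤ t →
      HasDerivAt x (-ρ * x t - κ₁ * spow (x t) γ₁ - κ₂ * spow (x t) γ₂) t) :
    sInf {t : ℝ | 0 ≤ t ∧ x t = 0} ≥
      Real.log (1 + (ρ + κ₂) / κ₁ * |x₀| ^ (1 - γ₁)) / ((ρ + κ₂) * (1 - γ₁)) := by
  subst hx0
  rcases lt_trichotomy (x 0) 0 with hneg | hzero | hpos
  · have hode_neg : ∀ t, 0 ≤ t → HasDerivAt (fun s => -x s)
        (-ρ * -x t - κ₁ * spow (-x t) γ₁ - κ₂ * spow (-x t) γ₂) t := fun t ht => by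
      rw [spow_neg, spow_neg]
      exact (hode t ht).neg.congr_deriv (by ring)
    have := log_div_le_sInf_of_ode (x := fun s => -x s) hρ.le hκ₁ hκ₂.le hγ₁1 hγ₂.le
      (neg_pos.2 hneg) (by linarith [neg_abs_le (x 0)]) hode_neg
    simpa only [abs_of_neg hneg, neg_eq_zero] using this
  · rw [hzero, abs_zero, zero_rpow (sub_ne_zero.2 hγ₁1.ne'), mul_zero, add_zero, log_one,
      zero_div]
    exact sInf_nonneg fun t ht => ht.1
  · rw [abs_of_pos hpos] at hx₀ ⊢
    exact log_div_le_sInf_of_ode hρ.le hκ₁ hκ₂.le hγ₁1 hγ₂.le hpos hx₀.le hode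

theorem stmt_8 (ρ κ₁ κ₂ γ₁ γ₂ : ℝ)
    (hρ : 0 < ρ) (hκ₁ : 0 < κ₁) (hκ₂ : 0 < κ₂)
    (hγ₁0 : 0 < γ₁) (hγ₁1 : γ₁ < 1) (hγ₂ : 1 < γ₂)
    (x : ℝ → ℝ) (x₀ : ℝ) (hx0 : x 0 = x₀) (hx₀ : |x₀| < 1)
    (hode : ∀ t, 0 ≤ t →
      HasDerivAt x (-ρ * x t - κ₁ * spow (x t) γ₁ - κ₂ * spow (x t) γ₂) t) :
    sInf {t : ℝ | 0 ≤ t ∧ x t = 0} ≥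
      Real.log (1 + (ρ + κ₂) / κ₁ * |x₀| ^ (1 - γ₁)) / ((ρ + κ₂) * (1 - γ₁)) :=
  stmt_8_general ρ κ₁ κ₂ γ₁ γ₂ hρ hκ₁ hκ₂ hγ₁1 hγ₂ x x₀ hx0 hx₀ hode
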